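/- arXiv:1906.11785 — 2 statements merged into one kernel-verified Lean document; each statement's English description precedes it below -/
import Mathlib

section
/- For finite MDPs M1 and M2, for all states s1 in S1, s2 in S2 and actions a2 in A2, the absolute difference between the optimal value of s1 in M1 and the optimal Q-value of (s2,a2) in M2 is at most the lax bisimulation distance d≈(s1,(s2,a2)) = dL((s1,π1*(s1)),(s2,a2)). -/
open Finset

/-- Kantorovich (earth mover's) distance between finitely supported distributions
`μ` on `X` and `ν` on `Y`, with ground cost `d : X → Y → ℝ`, defined via optimal
couplings. -/
noncomputable def kantorovich {X Y : Type} [Fintype X] [Fintype Y]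
    (d : X → Y → ℝ) (μ : X → ℝ) (ν : Y → ℝ) : ℝ :=
  sInf { c : ℝ | ∃ lam : X → Y → ℝ,
    (∀ x y, 0 ≤ lam x y) ∧ (∀ x, ∑ y, lam x y = μ x) ∧
    (∀ y, ∑ x, lam x y = ν y) ∧ c = ∑ x, ∑ y, lam x y * d x y }

lemma my_exists_sup_eq {ι : Type} [Fintype ι] [Nonempty ι] (f : ι → ℝ) :
    ∃ i, f i = ⨆ j, f j := exists_eq_ciSup_of_finite

lemma my_exists_inf_eq {ι : Type} [Fintype ι] [Nonempty ι] (f : ι → ℝ) :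
    ∃ i, f i = ⨅ j, f j := exists_eq_ciInf_of_finite

lemma my_le_sup {ι : Type} [Fintype ι] (f : ι → ℝ) (i : ι) : f i ≤ ⨆ j, f j :=
  le_ciSup (Finite.bddAbove_range f) i

lemma my_inf_le {ι : Type} [Fintype ι] (f : ι → ℝ) (i : ι) : ⨅ j, f j ≤ f i :=
  ciInf_le (Finite.bddBelow_range f) i

/-- Key bound: `|E_{P1}[f] − E_{P2}[g]| ≤ kantorovich d P1 P2 + c` whenever
`|f x − g y| ≤ d x y + c` pointwise and `P1, P2` are distributions. -/
lemma kantorovich_expectation_bound {X Y : Type} [Fintype X] [Fintype Y]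
    (d : X → Y → ℝ) (μ : X → ℝ) (ν : Y → ℝ)
    (hμ0 : ∀ x, 0 ≤ μ x) (hμ1 : ∑ x, μ x = 1)
    (hν0 : ∀ y, 0 ≤ ν y) (hν1 : ∑ y, ν y = 1)
    (f : X → ℝ) (g : Y → ℝ) (c : ℝ)
    (hfg : ∀ x y, |f x - g y| ≤ d x y + c) :
    |∑ x, μ x * f x - ∑ y, ν y * g y| ≤ kantorovich d μ ν + c := by
  have hkey : ∀ t ∈ { c : ℝ | ∃ lam : X → Y → ℝ,
      (∀ x y, 0 ≤ lam x y) ∧ (∀ x, ∑ y, lam x y = μ x) ∧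
      (∀ y, ∑ x, lam x y = ν y) ∧ c = ∑ x, ∑ y, lam x y * d x y },
      |∑ x, μ x * f x - ∑ y, ν y * g y| - c ≤ t := by
    rintro t ⟨lam, hl0, hl1, hl2, rfl⟩
    have hsum1 : ∑ x, ∑ y, lam x y = 1 := by
      simp_rw [hl1]; exact hμ1
    have hμf : ∑ x, μ x * f x = ∑ x, ∑ y, lam x y * f x := by
      refine Finset.sum_congr rfl fun x _ => ?_
      rw [← hl1 x, Finset.sum_mul]
    have hνg : ∑ y, ν y * g y = ∑ x, ∑ y, lam x y * g y := by
      rw [Finset.sum_comm]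
      refine Finset.sum_congr rfl fun y _ => ?_
      rw [← hl2 y, Finset.sum_mul]
    have hdiff : ∑ x, μ x * f x - ∑ y, ν y * g y
        = ∑ x, ∑ y, lam x y * (f x - g y) := by
      rw [hμf, hνg, ← Finset.sum_sub_distrib]
      refine Finset.sum_congr rfl fun x _ => ?_
      rw [← Finset.sum_sub_distrib]
      exact Finset.sum_congr rfl fun y _ => by ring
    rw [hdiff]
    have habs : |∑ x, ∑ y, lam x y * (f x - g y)|
        ≤ ∑ x, ∑ y, lam x y * (d x y + c) := by
      refine (Finset.abs_sum_le_sum_abs _ _).trans ?_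
      refine Finset.sum_le_sum fun x _ => ?_
      refine (Finset.abs_sum_le_sum_abs _ _).trans ?_
      refine Finset.sum_le_sum fun y _ => ?_
      rw [abs_mul, abs_of_nonneg (hl0 x y)]
      exact mul_le_mul_of_nonneg_left (hfg x y) (hl0 x y)
    have hsplit : ∑ x, ∑ y, lam x y * (d x y + c)
        = (∑ x, ∑ y, lam x y * d x y) + c := by
      have : ∑ x, ∑ y, lam x y * (d x y + c)
          = (∑ x, ∑ y, lam x y * d x y) + (∑ x, ∑ y, lam x y) * c := by
        simp_rw [mul_add, Finset.sum_add_distrib, Finset.sum_mul]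
      rw [this, hsum1, one_mul]
    linarith [habs, hsplit.le, hsplit.ge]
  have hne : { c : ℝ | ∃ lam : X → Y → ℝ,
      (∀ x y, 0 ≤ lam x y) ∧ (∀ x, ∑ y, lam x y = μ x) ∧
      (∀ y, ∑ x, lam x y = ν y) ∧ c = ∑ x, ∑ y, lam x y * d x y }.Nonempty := by
    refine ⟨_, fun x y => μ x * ν y, fun x y => mul_nonneg (hμ0 x) (hν0 y),
      fun x => ?_, fun y => ?_, rfl⟩
    · rw [← Finset.mul_sum, hν1, mul_one]
    · rw [← Finset.sum_mul, hμ1, one_mul]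
  have := le_csInf hne hkey
  unfold kantorovich
  linarith

/-- Lemma 1: `|V₁*(s₁) − Q₂*(s₂,a₂)| ≤ d≈(s₁,(s₂,a₂)) = d_L((s₁,π₁*(s₁)),(s₂,a₂))`. -/
theorem lemma1_value_bound_by_lax_bisimulation
    {S1 A1 S2 A2 : Type}
    [Fintype S1] [Fintype A1] [Fintype S2] [Fintype A2]
    [Nonempty S1] [Nonempty A1] [Nonempty S2] [Nonempty A2]
    (P1 : S1 → A1 → S1 → ℝ) (R1 : S1 → A1 → ℝ)
    (P2 : S2 → A2 → S2 → ℝ) (R2 : S2 → A2 → ℝ)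
    (hP1 : ∀ s a, (∀ s', 0 ≤ P1 s a s') ∧ ∑ s', P1 s a s' = 1)
    (hP2 : ∀ s a, (∀ s', 0 ≤ P2 s a s') ∧ ∑ s', P2 s a s' = 1)
    (γ : ℝ) (hγ0 : 0 ≤ γ) (hγ1 : γ < 1)
    -- optimal state-action values of the two MDPs (Bellman optimality equations)
    (Q1 : S1 → A1 → ℝ) (Q2 : S2 → A2 → ℝ)
    (hQ1 : ∀ s a, Q1 s a = R1 s a + γ * ∑ s', P1 s a s' * (⨆ b, Q1 s' b))
    (hQ2 : ∀ s a, Q2 s a = R2 s a + γ * ∑ s', P2 s a s' * (⨆ b, Q2 s' b))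
    -- optimal value function and optimal policy of the source MDP
    (V1 : S1 → ℝ) (hV1 : ∀ s, V1 s = ⨆ a, Q1 s a)
    (π1 : S1 → A1) (hπ1 : ∀ s, Q1 s (π1 s) = V1 s)
    -- the lax bisimulation metric: a fixed point of the operator F
    (dL : S1 × A1 → S2 × A2 → ℝ)
    (hdL : ∀ s1 a1 s2 a2,
      dL (s1, a1) (s2, a2) =
        |R1 s1 a1 - R2 s2 a2| +
          γ * kantorovich
            (fun t1 t2 => max
              (⨆ b1, ⨅ b2, dL (t1, b1) (t2, b2))
              (⨅ b1, ⨆ b2, dL (t1, b1) (t2, b2)))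
            (P1 s1 a1) (P2 s2 a2)) :
    ∀ (s1 : S1) (s2 : S2) (a2 : A2),
      |V1 s1 - Q2 s2 a2| ≤ dL (s1, π1 s1) (s2, a2) := by
  classical
  set V2 : S2 → ℝ := fun s => ⨆ b, Q2 s b with hV2def
  set d' : S1 → S2 → ℝ := fun t1 t2 => max
      (⨆ b1, ⨅ b2, dL (t1, b1) (t2, b2))
      (⨅ b1, ⨆ b2, dL (t1, b1) (t2, b2)) with hd'def
  -- the defect function and its maximum
  set D : (S1 × A1) × (S2 × A2) → ℝ :=
    fun p => |Q1 p.1.1 p.1.2 - Q2 p.2.1 p.2.2| - dL p.1 p.2 with hDdef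
  obtain ⟨p0, -, hp0⟩ :=
    Finset.exists_max_image (Finset.univ : Finset ((S1 × A1) × (S2 × A2))) D
      Finset.univ_nonempty
  set c : ℝ := D p0 with hcdef
  have hc : ∀ s1 a1 s2 a2, |Q1 s1 a1 - Q2 s2 a2| ≤ dL (s1, a1) (s2, a2) + c := by
    intro s1 a1 s2 a2
    have := hp0 ((s1, a1), (s2, a2)) (Finset.mem_univ _)
    simp only [hDdef] at this
    linarith
  -- value difference bound
  have hVd : ∀ t1 t2, |V1 t1 - V2 t2| ≤ d' t1 t2 + c := by
    intro t1 t2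
    rw [abs_le]
    constructor
    · -- V2 t2 - V1 t1 ≤ d' + c
      obtain ⟨b2, hb2⟩ := my_exists_sup_eq (fun b => Q2 t2 b)
      have h1 : ∀ b1, V2 t2 - V1 t1 ≤ dL (t1, b1) (t2, b2) + c := by
        intro b1
        have hV1ge : Q1 t1 b1 ≤ V1 t1 := by
          rw [hV1]; exact my_le_sup (fun a => Q1 t1 a) b1
        have := hc t1 b1 t2 b2
        have habs := neg_abs_le (Q1 t1 b1 - Q2 t2 b2)
        have : -(dL (t1, b1) (t2, b2) + c) ≤ Q1 t1 b1 - Q2 t2 b2 := by linarith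
        have hV2 : V2 t2 = Q2 t2 b2 := hb2.symm
        linarith
      have h2 : ∀ b1, V2 t2 - V1 t1 - c ≤ ⨆ b2', dL (t1, b1) (t2, b2') := by
        intro b1
        exact le_trans (by linarith [h1 b1]) (my_le_sup (fun b => dL (t1, b1) (t2, b)) b2)
      have h3 : V2 t2 - V1 t1 - c ≤ ⨅ b1, ⨆ b2', dL (t1, b1) (t2, b2') :=
        le_ciInf h2
      have h4 : (⨅ b1, ⨆ b2', dL (t1, b1) (t2, b2')) ≤ d' t1 t2 := le_max_right _ _
      linarith
    · -- V1 t1 - V2 t2 ≤ d' + c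
      obtain ⟨b1, hb1⟩ := my_exists_sup_eq (fun a => Q1 t1 a)
      have hV1eq : V1 t1 = Q1 t1 b1 := by rw [hV1]; exact hb1.symm
      have h1 : ∀ b2, V1 t1 - V2 t2 ≤ dL (t1, b1) (t2, b2) + c := by
        intro b2
        have hV2ge : Q2 t2 b2 ≤ V2 t2 := my_le_sup (fun b => Q2 t2 b) b2
        have := hc t1 b1 t2 b2
        have habs := le_abs_self (Q1 t1 b1 - Q2 t2 b2)
        linarith
      have h2 : V1 t1 - V2 t2 - c ≤ ⨅ b2, dL (t1, b1) (t2, b2) :=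
        le_ciInf (fun b2 => by linarith [h1 b2])
      have h3 : (⨅ b2, dL (t1, b1) (t2, b2)) ≤ ⨆ b1', ⨅ b2, dL (t1, b1') (t2, b2) :=
        my_le_sup (fun a => ⨅ b2, dL (t1, a) (t2, b2)) b1
      have h4 : (⨆ b1', ⨅ b2, dL (t1, b1') (t2, b2)) ≤ d' t1 t2 := le_max_left _ _
      linarith
  -- contraction step
  have hstep : ∀ s1 a1 s2 a2,
      |Q1 s1 a1 - Q2 s2 a2| ≤ dL (s1, a1) (s2, a2) + γ * c := by
    intro s1 a1 s2 a2
    have hEV : |∑ s', P1 s1 a1 s' * V1 s' - ∑ s', P2 s2 a2 s' * V2 s'|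
        ≤ kantorovich d' (P1 s1 a1) (P2 s2 a2) + c :=
      kantorovich_expectation_bound d' (P1 s1 a1) (P2 s2 a2)
        (hP1 s1 a1).1 (hP1 s1 a1).2 (hP2 s2 a2).1 (hP2 s2 a2).2
        V1 V2 c hVd
    have hq1 : Q1 s1 a1 = R1 s1 a1 + γ * ∑ s', P1 s1 a1 s' * V1 s' := by
      rw [hQ1]; congr 2; exact Finset.sum_congr rfl fun s' _ => by rw [hV1]
    have hq2 : Q2 s2 a2 = R2 s2 a2 + γ * ∑ s', P2 s2 a2 s' * V2 s' := by
      rw [hQ2]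
    rw [hq1, hq2, hdL]
    have h1 : |R1 s1 a1 + γ * ∑ s', P1 s1 a1 s' * V1 s'
        - (R2 s2 a2 + γ * ∑ s', P2 s2 a2 s' * V2 s')|
        ≤ |R1 s1 a1 - R2 s2 a2|
          + γ * |∑ s', P1 s1 a1 s' * V1 s' - ∑ s', P2 s2 a2 s' * V2 s'| := by
      have := abs_add_le (R1 s1 a1 - R2 s2 a2)
        (γ * (∑ s', P1 s1 a1 s' * V1 s' - ∑ s', P2 s2 a2 s' * V2 s'))
      rw [abs_mul, abs_of_nonneg hγ0] at this
      calc _ = |(R1 s1 a1 - R2 s2 a2)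
            + γ * (∑ s', P1 s1 a1 s' * V1 s' - ∑ s', P2 s2 a2 s' * V2 s')| := by
              ring_nf
        _ ≤ _ := this
    have h2 : γ * |∑ s', P1 s1 a1 s' * V1 s' - ∑ s', P2 s2 a2 s' * V2 s'|
        ≤ γ * (kantorovich d' (P1 s1 a1) (P2 s2 a2) + c) :=
      mul_le_mul_of_nonneg_left hEV hγ0
    have hd'eq : kantorovich
        (fun t1 t2 => max
          (⨆ b1, ⨅ b2, dL (t1, b1) (t2, b2))
          (⨅ b1, ⨆ b2, dL (t1, b1) (t2, b2)))
        (P1 s1 a1) (P2 s2 a2) = kantorovich d' (P1 s1 a1) (P2 s2 a2) := rfl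
    rw [hd'eq]
    nlinarith [h1, h2]
  -- conclude c ≤ 0
  have hcle : c ≤ γ * c := by
    have := hstep p0.1.1 p0.1.2 p0.2.1 p0.2.2
    simp only [Prod.mk.eta] at this
    have hceq : c = |Q1 p0.1.1 p0.1.2 - Q2 p0.2.1 p0.2.2| - dL p0.1 p0.2 := rfl
    linarith
  have hc0 : c ≤ 0 := by nlinarith
  intro s1 s2 a2
  have := hstep s1 (π1 s1) s2 a2
  rw [hπ1] at this
  nlinarith
end

section
/- If two states s1, s2 of a finite MDP are related by a bisimulation relation E (equal rewards for all actions and equal transition probabilities into each E-equivalence class for all actions), then Q*(s1,a) = Q*(s2,a) for all actions a, and hence V*(s1) = V*(s2). -/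
open Finset Classical

/-- If two states of a finite MDP are related by a bisimulation relation
(equal rewards for all actions, and equal transition probability into every
equivalence class for all actions), then their optimal Q-values agree for
every action, and hence their optimal values agree. -/
theorem bisimilar_states_have_equal_optimal_values
    {S A : Type} [Fintype S] [Fintype A] [Nonempty A]
    (P : S → A → S → ℝ) (R : S → A → ℝ)
    (hP : ∀ s a, (∀ s', 0 ≤ P s a s') ∧ ∑ s', P s a s' = 1)
    (γ : ℝ) (hγ0 : 0 ≤ γ) (hγ1 : γ < 1)
    (Q : S → A → ℝ)
    (hQ : ∀ s a, Q s a = R s a + γ * ∑ s', P s a s' * (⨆ b, Q s' b))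
    (E : S → S → Prop) (hE : Equivalence E)
    (hR : ∀ s1 s2, E s1 s2 → ∀ a, R s1 a = R s2 a)
    (hPE : ∀ s1 s2, E s1 s2 → ∀ a (s0 : S),
      ∑ s' ∈ Finset.univ.filter (fun s' => E s0 s'), P s1 a s' =
      ∑ s' ∈ Finset.univ.filter (fun s' => E s0 s'), P s2 a s') :
    ∀ s1 s2, E s1 s2 →
      (∀ a, Q s1 a = Q s2 a) ∧ (⨆ a, Q s1 a) = ⨆ a, Q s2 a := by
  classical
  intro s1 s2 h12
  set V : S → ℝ := fun s => ⨆ b, Q s b with hVdef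
  have hbdd : ∀ s : S, BddAbove (Set.range (Q s)) :=
    fun s => (Set.finite_range _).bddAbove
  have hVle : ∀ s b, Q s b ≤ V s := fun s b => le_ciSup (hbdd s) b
  have hVmem : ∀ s : S, ∃ a0 : A, V s = Q s a0 := by
    intro s
    obtain ⟨a0, ha0⟩ := Finite.exists_max (Q s)
    exact ⟨a0, le_antisymm (ciSup_le ha0) (hVle s a0)⟩
  have hQ' : ∀ s a, Q s a = R s a + γ * ∑ s', P s a s' * V s' := hQ
  -- the set of E-related triples
  let T : Finset (S × S × A) := Finset.univ.filter (fun p => E p.1 p.2.1)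
  have hTne : T.Nonempty := ⟨(s1, s2, Classical.arbitrary A), by simp [T, h12]⟩
  set D := T.sup' hTne (fun p => |Q p.1 p.2.2 - Q p.2.1 p.2.2|) with hDdef
  have hDmem : ∀ u v (a : A), E u v → |Q u a - Q v a| ≤ D := by
    intro u v a huv
    exact Finset.le_sup' (fun p : S × S × A => |Q p.1 p.2.2 - Q p.2.1 p.2.2|)
      (by simp [T, huv] : ((u, v, a) : S × S × A) ∈ T)
  have hD0 : (0:ℝ) ≤ D :=
    le_trans (abs_nonneg _) (hDmem s1 s2 (Classical.arbitrary A) h12)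
  have hVdiff : ∀ u v, E u v → |V u - V v| ≤ D := by
    intro u v huv
    rw [abs_sub_le_iff]
    constructor
    · obtain ⟨a0, ha0⟩ := hVmem u
      have h1 := hVle v a0
      have h2 : Q u a0 - Q v a0 ≤ D := le_trans (le_abs_self _) (hDmem u v a0 huv)
      linarith
    · obtain ⟨a0, ha0⟩ := hVmem v
      have h1 := hVle u a0
      have h2 : Q v a0 - Q u a0 ≤ D :=
        le_trans (le_abs_self _) (hDmem v u a0 (hE.symm huv))
      linarith
  letI st : Setoid S := ⟨E, hE⟩
  -- contraction step
  have key : ∀ u v, E u v → ∀ a, |Q u a - Q v a| ≤ γ * D := by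
    intro u v huv a
    have hsum : |(∑ s', P u a s' * V s') - (∑ s', P v a s' * V s')| ≤ D := by
      have hfib : ∀ w : S, (∑ s', P w a s' * V s') =
          ∑ q : Quotient st, ∑ s' ∈ Finset.univ.filter
            (fun s' => Quotient.mk st s' = q), P w a s' * V s' :=
        fun w => (Finset.sum_fiberwise _ _ _).symm
      rw [hfib u, hfib v, ← Finset.sum_sub_distrib]
      refine le_trans (Finset.abs_sum_le_sum_abs _ _) ?_
      have hbound : ∀ q : Quotient st,
          |(∑ s' ∈ Finset.univ.filter (fun s' => Quotient.mk st s' = q), P u a s' * V s')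
            - (∑ s' ∈ Finset.univ.filter (fun s' => Quotient.mk st s' = q), P v a s' * V s')|
          ≤ D * ∑ s' ∈ Finset.univ.filter (fun s' => Quotient.mk st s' = q), P u a s' := by
        intro q
        set C := Finset.univ.filter (fun s' => Quotient.mk st s' = q) with hC
        have hCne : C.Nonempty := ⟨q.out, by simp [hC, Quotient.out_eq]⟩
        have hmemE : ∀ x ∈ C, ∀ y ∈ C, E x y := by
          intro x hx y hy
          simp only [hC, Finset.mem_filter, Finset.mem_univ, true_and] at hx hy
          exact Quotient.exact (hx.trans hy.symm)
        set M := C.sup' hCne V with hM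
        set m := C.inf' hCne V with hm
        have hMm : M - m ≤ D := by
          obtain ⟨x, hx, hxM⟩ := C.exists_mem_eq_sup' hCne V
          obtain ⟨y, hy, hym⟩ := C.exists_mem_eq_inf' hCne V
          have h1 := hVdiff x y (hmemE x hx y hy)
          have h2 : V x - V y ≤ D := le_trans (le_abs_self _) h1
          rw [hM, hm, hxM, hym]
          exact h2
        have hpeq : ∑ s' ∈ C, P u a s' = ∑ s' ∈ C, P v a s' := by
          have hCeq : Finset.univ.filter (fun s' => E q.out s') = C := by
            ext s'
            simp only [hC, Finset.mem_filter, Finset.mem_univ, true_and]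
            constructor
            · intro h
              exact (Quotient.sound (hE.symm h)).trans (Quotient.out_eq q)
            · intro h
              exact hE.symm (Quotient.exact (h.trans (Quotient.out_eq q).symm))
          have := hPE u v huv a q.out
          rwa [hCeq] at this
        have hpnn : ∀ w : S, (0:ℝ) ≤ ∑ s' ∈ C, P w a s' :=
          fun w => Finset.sum_nonneg fun s' _ => (hP w a).1 s'
        have hup : ∀ w : S, ∑ s' ∈ C, P w a s' * V s' ≤ (∑ s' ∈ C, P w a s') * M := by
          intro w
          rw [Finset.sum_mul]
          exact Finset.sum_le_sum fun s' hs' =>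
            mul_le_mul_of_nonneg_left (Finset.le_sup' V hs') ((hP w a).1 s')
        have hlo : ∀ w : S, (∑ s' ∈ C, P w a s') * m ≤ ∑ s' ∈ C, P w a s' * V s' := by
          intro w
          rw [Finset.sum_mul]
          exact Finset.sum_le_sum fun s' hs' =>
            mul_le_mul_of_nonneg_left (Finset.inf'_le V hs') ((hP w a).1 s')
        rw [abs_sub_le_iff]
        have hu1 := hup u
        have hu2 := hup v
        have hl1 := hlo u
        have hl2 := hlo v
        rw [← hpeq] at hu2 hl2
        constructor
        · nlinarith [hpnn u]
        · nlinarith [hpnn u]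
      calc ∑ q : Quotient st, |(∑ s' ∈ Finset.univ.filter (fun s' => Quotient.mk st s' = q), P u a s' * V s')
            - (∑ s' ∈ Finset.univ.filter (fun s' => Quotient.mk st s' = q), P v a s' * V s')|
          ≤ ∑ q : Quotient st, D * ∑ s' ∈ Finset.univ.filter
              (fun s' => Quotient.mk st s' = q), P u a s' :=
            Finset.sum_le_sum fun q _ => hbound q
        _ = D * ∑ q : Quotient st, ∑ s' ∈ Finset.univ.filter
              (fun s' => Quotient.mk st s' = q), P u a s' := by rw [Finset.mul_sum]
        _ = D * ∑ s', P u a s' := by rw [Finset.sum_fiberwise]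
        _ = D := by rw [(hP u a).2, mul_one]
    have hdiff : Q u a - Q v a =
        γ * ((∑ s', P u a s' * V s') - (∑ s', P v a s' * V s')) := by
      rw [hQ' u a, hQ' v a, hR u v huv a]; ring
    rw [hdiff, abs_mul, abs_of_nonneg hγ0]
    exact mul_le_mul_of_nonneg_left hsum hγ0
  have hcontr : D ≤ γ * D := by
    refine Finset.sup'_le hTne _ (fun p hp => ?_)
    simp only [T, Finset.mem_filter, Finset.mem_univ, true_and] at hp
    exact key p.1 p.2.1 hp p.2.2
  have hDle : D ≤ 0 := by nlinarith
  have hQeq : ∀ a, Q s1 a = Q s2 a := by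
    intro a
    have h := le_trans (hDmem s1 s2 a h12) hDle
    have := abs_nonpos_iff.mp h
    linarith [sub_eq_zero.mp this]
  refine ⟨hQeq, ?_⟩
  rw [show Q s1 = Q s2 from funext hQeq]
end
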